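/- Let k be a field of characteristic p, G a finite p-group, and N ⊴ G such that γ_i^G(N) ⊆ D_i(N) for every i ≥ 2, where γ^G denotes the relative lower central series and D_i(N) the Jennings series of N. Then for every n ≥ 1 the ideal J_n(N,G) equals I(N)^n·I(G). -/

import Mathlib

/-- The Jennings (Brauer–Jennings–Zassenhaus) series of a group:
`D_n(G) = ∏_{i p^j ≥ n} γ_i(G)^{p^j}` (here `γ_{i+1}(G) = lowerCentralSeries G i`). -/
def jennings (p : ℕ) (G : Type*) [Group G] (n : ℕ) : Subgroup G :=
  ⨆ (i : ℕ) (j : ℕ) (_ : n ≤ (i + 1) * p ^ j),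
    Subgroup.closure {x : G | ∃ y ∈ (⊤ : Subgroup G).lowerCentralSeries i, x = y ^ p ^ j}

/-- The relative lower central series: `γ_1^G(N) = G`, `γ_{n+1}^G(N) = [γ_n^G(N), N]`.
Here `gammaRel N i` is `γ_{i+1}^G(N)`. -/
def gammaRel {G : Type*} [Group G] (N : Subgroup G) : ℕ → Subgroup G
  | 0 => ⊤
  | n + 1 => ⁅gammaRel N n, N⁆

/-- The ideals `J_n(N,G)`: `J_1 = I(N)·I(G)`, `J_{n+1} = I(N)·J_n + J_n·I(N)`.
Here `Jrel IN IG n` is `J_{n+1}`. -/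
def Jrel {k R : Type*} [CommSemiring k] [Semiring R] [Algebra k R]
    (IN IG : Submodule k R) : ℕ → Submodule k R
  | 0 => IN * IG
  | n + 1 => IN * Jrel IN IG n + Jrel IN IG n * IN

/-!
For `g ∈ G` and `h ∈ N`, writing group elements also for their images in `k[G]`,
`(g - 1)(h - 1) = (ghg⁻¹ - 1)(g - 1) + ([g, h] - 1)(h - 1) + ([g, h] - 1)`.
The hypothesis for `i = 2` puts `[g, h]` into `D_2(N)`, and `D_2(N)` lies in the dimension
subgroup `N ∩ (1 + I(N)²)`: commutators raise the `I(N)`-adic filtration by one, and `p^j`-th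
powers multiply it by `p^j` since `(x - 1)^(p^j) = x^(p^j) - 1` in characteristic `p`.
Hence `I(G) I(N) ⊆ I(N) I(G)`, and the recursion for `J_n` collapses to `I(N)^n I(G)`.
-/

open scoped commutatorElement

theorem Submodule.pow_le_pow_of_mul_le_self {R A : Type*} [CommSemiring R] [Semiring A]
    [Algebra R A] {I : Submodule R A} (hI : I * I ≤ I) {m n : ℕ} (hm : m ≠ 0)
    (hmn : m ≤ n) : I ^ n ≤ I ^ m := by
  induction n, hmn using Nat.le_induction with
  | base => exact le_rfl
  | succ n hmn ih =>
    obtain ⟨n, rfl⟩ := Nat.exists_eq_add_one_of_ne_zero (by omega : n ≠ 0)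
    calc I ^ (n + 1 + 1) = I ^ n * (I * I) := by rw [pow_succ, pow_succ, mul_assoc]
      _ ≤ I ^ n * I := mul_le_mul_right hI _
      _ = I ^ (n + 1) := (pow_succ _ _).symm
      _ ≤ I ^ m := ih

theorem Jrel_eq_pow_succ_mul {k R : Type*} [CommSemiring k] [Semiring R] [Algebra k R]
    {IN IG : Submodule k R} (h : IG * IN ≤ IN * IG) (m : ℕ) :
    Jrel IN IG m = IN ^ (m + 1) * IG := by
  induction m with
  | zero => rw [zero_add, pow_one]; rfl
  | succ m ih =>
    have hleft : IN * (IN ^ (m + 1) * IG) = IN ^ (m + 2) * IG := by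
      rw [← mul_assoc, ← pow_succ']
    have hright : IN ^ (m + 1) * IG * IN ≤ IN ^ (m + 2) * IG :=
      calc IN ^ (m + 1) * IG * IN = IN ^ (m + 1) * (IG * IN) := mul_assoc _ _ _
        _ ≤ IN ^ (m + 1) * (IN * IG) := mul_le_mul_right h _
        _ = IN ^ (m + 2) * IG := by rw [← mul_assoc, ← pow_succ]
    change IN * Jrel IN IG m + Jrel IN IG m * IN = _
    rw [ih, hleft]
    exact sup_eq_left.2 hright

section AugmentationSpan

variable (k : Type*) [CommRing k] {G : Type*} [Group G]

/-- The augmentation ideal `I(H)` of `k[H]`, viewed inside `k[G]`. -/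
noncomputable def augSpan (H : Subgroup G) : Submodule k (MonoidAlgebra k G) :=
  Submodule.span k {z | ∃ h ∈ H, z = MonoidAlgebra.of k G h - 1}

variable {k} {H : Subgroup G}

theorem of_sub_one_mem_augSpan {h : G} (hh : h ∈ H) :
    MonoidAlgebra.of k G h - 1 ∈ augSpan k H :=
  Submodule.subset_span ⟨h, hh, rfl⟩

theorem augSpan_mono {K : Subgroup G} (hHK : H ≤ K) : augSpan k H ≤ augSpan k K :=
  Submodule.span_mono fun _ ⟨h, hh, hz⟩ => ⟨h, hHK hh, hz⟩

theorem augSpan_top :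
    augSpan k (⊤ : Subgroup G) =
      Submodule.span k {z | ∃ h : G, z = MonoidAlgebra.of k G h - 1} := by
  simp [augSpan]

theorem augSpan_mul_augSpan_le : augSpan k H * augSpan k H ≤ augSpan k H := by
  rw [augSpan, Submodule.span_mul_span, Submodule.span_le]
  rintro _ ⟨_, ⟨a, ha, rfl⟩, _, ⟨b, hb, rfl⟩, rfl⟩
  have h : (MonoidAlgebra.of k G a - 1) * (MonoidAlgebra.of k G b - 1) =
      (MonoidAlgebra.of k G (a * b) - 1) - (MonoidAlgebra.of k G a - 1) -
        (MonoidAlgebra.of k G b - 1) := by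
    rw [map_mul]; noncomm_ring
  change _ * _ ∈ _
  rw [h]
  exact sub_mem (sub_mem (of_sub_one_mem_augSpan (mul_mem ha hb)) (of_sub_one_mem_augSpan ha))
    (of_sub_one_mem_augSpan hb)

theorem augSpan_pow_le_pow {m n : ℕ} (hm : m ≠ 0) (hmn : m ≤ n) :
    augSpan k H ^ n ≤ augSpan k H ^ m :=
  Submodule.pow_le_pow_of_mul_le_self (I := augSpan k H) augSpan_mul_augSpan_le hm hmn

theorem mul_of_mem_augSpan_pow {x : MonoidAlgebra k G} {n : ℕ}
    (hx : x ∈ augSpan k H ^ (n + 1)) {h : G} (hh : h ∈ H) :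
    x * MonoidAlgebra.of k G h ∈ augSpan k H ^ (n + 1) := by
  have hx' : x * (MonoidAlgebra.of k G h - 1) ∈ augSpan k H ^ (n + 1 + 1) := by
    rw [pow_succ]
    exact Submodule.mul_mem_mul hx (of_sub_one_mem_augSpan hh)
  have hsplit : x * MonoidAlgebra.of k G h = x * (MonoidAlgebra.of k G h - 1) + x := by
    noncomm_ring
  rw [hsplit]
  exact add_mem (augSpan_pow_le_pow n.add_one_ne_zero (Nat.le_succ _) hx') hx

end AugmentationSpan

section DimensionSubgroup

variable (k : Type*) [CommRing k] {G : Type*} [Group G] (H : Subgroup G)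

/-- The dimension subgroup `{x ∈ H | x - 1 ∈ I(H)^(n+1)}`; the shift by one matches the
indexing of `Subgroup.lowerCentralSeries`. -/
noncomputable def dimensionSubgroup (n : ℕ) : Subgroup H where
  carrier := {x | MonoidAlgebra.of k G x - 1 ∈ augSpan k H ^ (n + 1)}
  one_mem' := by
    rw [Set.mem_ofPred_eq, OneMemClass.coe_one, map_one, sub_self]
    exact zero_mem _
  mul_mem' {a b} ha hb := by
    have h : MonoidAlgebra.of k G ↑(a * b) - 1 =
        (MonoidAlgebra.of k G a - 1) * MonoidAlgebra.of k G b +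
          (MonoidAlgebra.of k G b - 1) := by
      rw [Subgroup.coe_mul, map_mul]; noncomm_ring
    rw [Set.mem_ofPred_eq, h]
    exact add_mem (mul_of_mem_augSpan_pow ha b.2) hb
  inv_mem' {a} ha := by
    have h : MonoidAlgebra.of k G ↑a⁻¹ - 1 =
        -((MonoidAlgebra.of k G a - 1) * MonoidAlgebra.of k G ↑a⁻¹) := by
      rw [sub_mul, ← map_mul, Subgroup.coe_inv, mul_inv_cancel, map_one, one_mul, neg_sub]
    rw [Set.mem_ofPred_eq, h]
    exact neg_mem (mul_of_mem_augSpan_pow ha a⁻¹.2)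

variable {k H}

theorem mem_dimensionSubgroup {n : ℕ} {x : H} :
    x ∈ dimensionSubgroup k H n ↔ MonoidAlgebra.of k G x - 1 ∈ augSpan k H ^ (n + 1) :=
  Iff.rfl

theorem commutator_mem_dimensionSubgroup_succ {n : ℕ} {a : H}
    (ha : a ∈ dimensionSubgroup k H n) (b : H) :
    ⁅a, b⁆ ∈ dimensionSubgroup k H (n + 1) := by
  set A := MonoidAlgebra.of k G a
  set B := MonoidAlgebra.of k G b
  have hcomm : MonoidAlgebra.of k G ↑⁅a, b⁆ - 1 =
      ((A - 1) * (B - 1) - (B - 1) * (A - 1)) * MonoidAlgebra.of k G (↑b * ↑a)⁻¹ := by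
    have hAB : (A - 1) * (B - 1) - (B - 1) * (A - 1) = A * B - B * A := by noncomm_ring
    rw [hAB, sub_mul, ← map_mul, ← map_mul, ← map_mul, ← map_mul, mul_inv_cancel, map_one]
    simp only [commutatorElement_def, Subgroup.coe_mul, Subgroup.coe_inv, mul_inv_rev,
      ← mul_assoc]
  have hb : B - 1 ∈ augSpan k H := of_sub_one_mem_augSpan b.2
  rw [mem_dimensionSubgroup, hcomm]
  refine mul_of_mem_augSpan_pow (sub_mem ?_ ?_) (inv_mem (mul_mem b.2 a.2))
  · rw [pow_succ]
    exact Submodule.mul_mem_mul ha hb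
  · rw [pow_succ']
    exact Submodule.mul_mem_mul hb ha

theorem lowerCentralSeries_le_dimensionSubgroup (n : ℕ) :
    (⊤ : Subgroup H).lowerCentralSeries n ≤ dimensionSubgroup k H n := by
  induction n with
  | zero =>
    intro x _
    simpa [mem_dimensionSubgroup] using of_sub_one_mem_augSpan (k := k) x.2
  | succ n ih =>
    rw [Subgroup.lowerCentralSeries_succ, Subgroup.commutator_le]
    exact fun a ha b _ => commutator_mem_dimensionSubgroup_succ (ih ha) b

theorem jennings_succ_le_dimensionSubgroup {p : ℕ} [Fact p.Prime] [CharP k p] (n : ℕ) :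
    jennings p H (n + 1) ≤ dimensionSubgroup k H n := by
  have : CharP (MonoidAlgebra k G) p := charP_of_injective_algebraMap' k p
  refine iSup_le fun i => iSup_le fun j => iSup_le fun hij => (Subgroup.closure_le _).2 ?_
  rintro _ ⟨y, hy, rfl⟩
  have hy' := lowerCentralSeries_le_dimensionSubgroup (k := k) i hy
  have hfrob : MonoidAlgebra.of k G y ^ p ^ j - 1 = (MonoidAlgebra.of k G y - 1) ^ p ^ j := by
    rw [sub_pow_char_pow_of_commute _ _ (Commute.one_right _), one_pow]
  rw [SetLike.mem_coe, mem_dimensionSubgroup, Subgroup.coe_pow, map_pow, hfrob]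
  refine augSpan_pow_le_pow n.add_one_ne_zero hij ?_
  rw [pow_mul]
  exact Submodule.pow_mem_pow _ hy' _

end DimensionSubgroup

theorem augSpan_top_mul_augSpan_le {k G : Type*} [CommRing k] [Group G] {N : Subgroup G}
    [N.Normal] (hN : ⁅(⊤ : Subgroup G), N⁆ ≤ (dimensionSubgroup k N 1).map N.subtype) :
    augSpan k ⊤ * augSpan k N ≤ augSpan k N * augSpan k ⊤ := by
  rw [augSpan, augSpan, Submodule.span_mul_span, Submodule.span_le]
  rintro _ ⟨_, ⟨g, -, rfl⟩, _, ⟨h, hh, rfl⟩, rfl⟩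
  obtain ⟨c, hc, hcgh⟩ := hN (Subgroup.commutator_mem_commutator (Subgroup.mem_top g) hh)
  have hC : MonoidAlgebra.of k G ⁅g, h⁆ - 1 ∈ augSpan k N ^ 2 := hcgh ▸ hc
  set A := MonoidAlgebra.of k G g
  set B := MonoidAlgebra.of k G h
  set C := MonoidAlgebra.of k G ⁅g, h⁆
  set B' := MonoidAlgebra.of k G (g * h * g⁻¹)
  have hB'A : B' * A = A * B := by simp only [B', A, B, ← map_mul, inv_mul_cancel_right]
  have hCB : C * B = B' := by
    simp only [C, B, B', ← map_mul, commutatorElement_def, inv_mul_cancel_right]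
  have hsplit : (A - 1) * (B - 1) = (B' - 1) * (A - 1) + ((C - 1) * (B - 1) + (C - 1)) :=
    calc (A - 1) * (B - 1) = B' * A - A + (C * B - B') - B + 1 := by
          rw [hB'A, hCB]; noncomm_ring
      _ = _ := by noncomm_ring
  have hgN : g * h * g⁻¹ ∈ N := ‹N.Normal›.conj_mem h hh g
  have hcN : ⁅g, h⁆ ∈ N := hcgh ▸ c.2
  have hsq : augSpan k N ^ 2 ≤ augSpan k N * augSpan k ⊤ := by
    rw [pow_two]
    exact mul_le_mul_right (augSpan_mono (k := k) (le_top : N ≤ ⊤)) _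
  change _ * _ ∈ augSpan k N * augSpan k ⊤
  rw [hsplit]
  have hG : A - 1 ∈ augSpan k ⊤ := of_sub_one_mem_augSpan (Subgroup.mem_top g)
  exact add_mem (Submodule.mul_mem_mul (of_sub_one_mem_augSpan hgN) hG)
    (add_mem (Submodule.mul_mem_mul (of_sub_one_mem_augSpan hcN)
      (of_sub_one_mem_augSpan (Subgroup.mem_top h))) (hsq hC))

theorem Jrel_eq_pow_mul_aug_general (p : ℕ) (hp : p.Prime) (k : Type*) [Field k] [CharP k p]
    (G : Type*) [Group G]
    (N : Subgroup G) [N.Normal]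
    (hγ : ∀ i : ℕ, 2 ≤ i → gammaRel N (i - 1) ≤ (jennings p ↥N i).map N.subtype) :
    ∀ n : ℕ, 1 ≤ n →
      Jrel (Submodule.span k {z : MonoidAlgebra k G | ∃ h ∈ N, z = MonoidAlgebra.of k G h - 1})
          (Submodule.span k {z : MonoidAlgebra k G | ∃ h : G, z = MonoidAlgebra.of k G h - 1})
          (n - 1) =
        (Submodule.span k
            {z : MonoidAlgebra k G | ∃ h ∈ N, z = MonoidAlgebra.of k G h - 1}) ^ n *
          Submodule.span k {z : MonoidAlgebra k G | ∃ h : G, z = MonoidAlgebra.of k G h - 1} := by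
  have : Fact p.Prime := ⟨hp⟩
  have hN : ⁅(⊤ : Subgroup G), N⁆ ≤ (dimensionSubgroup k N 1).map N.subtype :=
    (hγ 2 le_rfl).trans
      (Subgroup.map_mono (jennings_succ_le_dimensionSubgroup (k := k) (H := N) 1))
  intro n hn
  obtain ⟨m, rfl⟩ := Nat.exists_eq_add_of_le' hn
  have hcomm := augSpan_top_mul_augSpan_le hN
  have h := Jrel_eq_pow_succ_mul hcomm m
  rw [augSpan_top, augSpan] at h
  rw [Nat.add_sub_cancel]
  exact h

/-- If `γ_i^G(N) ⊆ D_i(N)` for every `i ≥ 2`, then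
`J_n(N,G) = I(N)^n·I(G)` for every `n ≥ 1`. -/
theorem Jrel_eq_pow_mul_aug (p : ℕ) (hp : p.Prime) (k : Type*) [Field k] [CharP k p]
    (G : Type*) [Group G] [Finite G] (hG : ∃ s : ℕ, Nat.card G = p ^ s)
    (N : Subgroup G) [N.Normal]
    (hγ : ∀ i : ℕ, 2 ≤ i → gammaRel N (i - 1) ≤ (jennings p ↥N i).map N.subtype) :
    ∀ n : ℕ, 1 ≤ n →
      Jrel (Submodule.span k {z : MonoidAlgebra k G | ∃ h ∈ N, z = MonoidAlgebra.of k G h - 1})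
          (Submodule.span k {z : MonoidAlgebra k G | ∃ h : G, z = MonoidAlgebra.of k G h - 1})
          (n - 1) =
        (Submodule.span k
            {z : MonoidAlgebra k G | ∃ h ∈ N, z = MonoidAlgebra.of k G h - 1}) ^ n *
          Submodule.span k {z : MonoidAlgebra k G | ∃ h : G, z = MonoidAlgebra.of k G h - 1} :=
  Jrel_eq_pow_mul_aug_general p hp k G N hγ
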